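/- arXiv:0910.1856 — 4 statements merged into one kernel-verified Lean document; each statement's English description precedes it below -/
import Mathlib

section
/- Let ~ be an equivalence relation on {1,...,m} with all equivalence classes of size at most w, and let 1 ≤ c ≤ m-1. Then the number of pairs (p,q) with p ~ q, 1 ≤ p ≤ c, and c+1 ≤ q ≤ m is at most (w/m)·c·(m-c). -/
/-!
Sort the points by equivalence class: a class with `aᵢ` points among the first `c` and `bᵢ`
among the last `m - c` contributes `aᵢ bᵢ` pairs, and `aᵢ + bᵢ ≤ w`. Since `m = ∑ (aᵢ + bᵢ)`,
`c = ∑ aᵢ` and `m - c = ∑ bᵢ`, it suffices that `(∑ (aᵢ + bᵢ)) ∑ aᵢ bᵢ ≤ w (∑ aᵢ) (∑ bᵢ)`.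
Expanding both sides as double sums and symmetrising, this follows termwise from the
two-class inequality `(a' + b') a b + (a + b) a' b' ≤ w (a b' + a' b)`.
-/

open Finset

/-- The left side is `a b' (a' + b) + a' b (a + b')`. If `a' + b > w` then `a < a'` and `b' < b`,
so `a b' ≤ a' b`, and by rearrangement both factors may be replaced by their mean, which is
at most `w`. -/
theorem Nat.add_mul_mul_add_add_mul_mul_le {w a b a' b' : ℕ} (h : a + b ≤ w)
    (h' : a' + b' ≤ w) : (a' + b') * (a * b) + (a + b) * (a' * b') ≤ w * (a * b' + a' * b) := by
  wlog hpq : a + b' ≤ a' + b generalizing a b a' b'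
  · have := this h' h (by omega)
    linarith
  have hsplit : (a' + b') * (a * b) + (a + b) * (a' * b') =
      a * b' * (a' + b) + a' * b * (a + b') := by
    ring
  rw [hsplit, mul_add w, mul_comm w, mul_comm w]
  rcases le_or_gt (a' + b) w with hp | hp
  · gcongr; omega
  · have hX : a * b' ≤ a' * b := Nat.mul_le_mul (by omega) (by omega)
    have hrearrange := mul_add_mul_le_mul_add_mul hX hpq
    have hmean : (a * b' + a' * b) * ((a' + b) + (a + b')) ≤ (a * b' + a' * b) * (2 * w) := by
      gcongr; omega
    linarith

theorem Finset.sum_add_mul_sum_mul_le {ι : Type*} (s : Finset ι) (a b : ι → ℕ) {w : ℕ}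
    (h : ∀ i ∈ s, a i + b i ≤ w) :
    (∑ i ∈ s, (a i + b i)) * ∑ i ∈ s, a i * b i ≤ w * ((∑ i ∈ s, a i) * ∑ i ∈ s, b i) := by
  suffices 2 * ((∑ i ∈ s, (a i + b i)) * ∑ i ∈ s, a i * b i) ≤
      2 * (w * ((∑ i ∈ s, a i) * ∑ i ∈ s, b i)) by omega
  calc 2 * ((∑ i ∈ s, (a i + b i)) * ∑ i ∈ s, a i * b i)
      = ∑ i ∈ s, ∑ j ∈ s, ((a j + b j) * (a i * b i) + (a i + b i) * (a j * b j)) := by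
        rw [two_mul]
        nth_rw 1 [sum_mul_sum, sum_comm]
        rw [sum_mul_sum, ← sum_add_distrib]
        simp_rw [← sum_add_distrib]
    _ ≤ ∑ i ∈ s, ∑ j ∈ s, w * (a i * b j + a j * b i) := by
        gcongr with i hi j hj
        exact Nat.add_mul_mul_add_add_mul_mul_le (h i hi) (h j hj)
    _ = w * ∑ i ∈ s, ∑ j ∈ s, a i * b j + w * ∑ i ∈ s, ∑ j ∈ s, a j * b i := by
        simp_rw [mul_add, sum_add_distrib, mul_sum]
    _ = 2 * (w * ((∑ i ∈ s, a i) * ∑ i ∈ s, b i)) := by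
        rw [sum_comm (f := fun i j => a j * b i), ← sum_mul_sum]
        ring

section CrossPairs

variable {α κ : Type*} [Fintype α] [DecidableEq α] [DecidableEq κ]

theorem Finset.card_filter_add_card_filter_compl (f : α → κ) (S : Finset α) (k : κ) :
    #{p ∈ S | f p = k} + #{q ∈ Sᶜ | f q = k} = #{p | f p = k} := by
  rw [← card_union_of_disjoint (disjoint_filter_filter disjoint_compl_right), ← filter_union,
    union_compl]

def crossPairs (f : α → κ) (S : Finset α) : Finset (α × α) :=
  {pq | f pq.1 = f pq.2 ∧ pq.1 ∈ S ∧ pq.2 ∉ S}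

theorem card_crossPairs_eq_sum [Fintype κ] (f : α → κ) (S : Finset α) :
    #(crossPairs f S) = ∑ k, #{p ∈ S | f p = k} * #{q ∈ Sᶜ | f q = k} := by
  rw [crossPairs, card_eq_sum_card_fiberwise (f := fun pq => f pq.1) (t := univ) (by simp)]
  refine sum_congr rfl fun k _ => ?_
  rw [← card_product]
  congr 1
  ext ⟨p, q⟩
  simp only [mem_filter, mem_univ, true_and, mem_product, mem_compl]
  grind

theorem card_mul_card_crossPairs_le [Fintype κ] (f : α → κ) (S : Finset α) {w : ℕ}
    (hw : ∀ k, #{p | f p = k} ≤ w) :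
    Fintype.card α * #(crossPairs f S) ≤ w * #S * #Sᶜ := by
  have hS : ∑ k, #{p ∈ S | f p = k} = #S := (card_eq_sum_card_fiberwise (by simp)).symm
  have hSc : ∑ k, #{q ∈ Sᶜ | f q = k} = #Sᶜ := (card_eq_sum_card_fiberwise (by simp)).symm
  calc Fintype.card α * #(crossPairs f S)
      = (∑ k, (#{p ∈ S | f p = k} + #{q ∈ Sᶜ | f q = k})) *
          ∑ k, #{p ∈ S | f p = k} * #{q ∈ Sᶜ | f q = k} := by
        rw [sum_add_distrib, hS, hSc, card_add_card_compl, card_crossPairs_eq_sum]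
    _ ≤ w * ((∑ k, #{p ∈ S | f p = k}) * ∑ k, #{q ∈ Sᶜ | f q = k}) :=
        sum_add_mul_sum_mul_le _ _ _ fun k _ =>
          (card_filter_add_card_filter_compl f S k).trans_le (hw k)
    _ = w * #S * #Sᶜ := by rw [hS, hSc, mul_assoc]

end CrossPairs

theorem sum_orbits_eclasses1_bound_general (m w c : ℕ)
    (R : Fin m → Fin m → Prop) [DecidableRel R] (hR : Equivalence R)
    (hclass : ∀ p : Fin m, (Finset.univ.filter (fun q => R p q)).card ≤ w) :
    m * (Finset.univ.filter (fun pq : Fin m × Fin m =>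
        R pq.1 pq.2 ∧ (pq.1 : ℕ) < c ∧ c ≤ (pq.2 : ℕ))).card ≤ w * c * (m - c) := by
  classical
  let r : Setoid (Fin m) := ⟨R, hR⟩
  let S : Finset (Fin m) := {p | (p : ℕ) < c}
  have hS : #S = min m c := Fin.card_filter_val_lt
  have hSc : #Sᶜ = m - c := by rw [card_compl, Fintype.card_fin, hS]; omega
  have hfiber : ∀ k : Quotient r, #{p | Quotient.mk r p = k} ≤ w := by
    intro k
    obtain ⟨p, rfl⟩ := Quotient.mk_surjective k
    convert hclass p using 3
    exact Quotient.eq.trans ⟨hR.symm, hR.symm⟩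
  have hpairs : ({pq | R pq.1 pq.2 ∧ (pq.1 : ℕ) < c ∧ c ≤ (pq.2 : ℕ)} : Finset (Fin m × Fin m)) =
      crossPairs (Quotient.mk r) S := by
    ext
    simp [crossPairs, S, Quotient.eq, r]
  calc m * #{pq : Fin m × Fin m | R pq.1 pq.2 ∧ (pq.1 : ℕ) < c ∧ c ≤ (pq.2 : ℕ)}
      ≤ w * #S * #Sᶜ := by
        rw [hpairs]
        simpa using card_mul_card_crossPairs_le (Quotient.mk r) S hfiber
    _ ≤ w * c * (m - c) := by rw [hS, hSc]; gcongr; exact min_le_right m c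

/-- Lemma (eclasses1), inequality part: if every equivalence class of `R` on `Fin m`
has size at most `w` and `1 ≤ c ≤ m-1`, then the number of `R`-related pairs `(p,q)`
with `p` among the first `c` indices and `q` among the last `m-c` indices
is at most `(w/m)·c·(m-c)`. -/
theorem sum_orbits_eclasses1_bound (m w c : ℕ) (hm : 0 < m) (hw : 0 < w)
    (hc1 : 1 ≤ c) (hc2 : c ≤ m - 1)
    (R : Fin m → Fin m → Prop) [DecidableRel R] (hR : Equivalence R)
    (hclass : ∀ p : Fin m, (Finset.univ.filter (fun q => R p q)).card ≤ w) :
    m * (Finset.univ.filter (fun pq : Fin m × Fin m =>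
        R pq.1 pq.2 ∧ (pq.1 : ℕ) < c ∧ c ≤ (pq.2 : ℕ))).card ≤ w * c * (m - c) :=
  sum_orbits_eclasses1_bound_general m w c R hR hclass
end

section
/- Let ~ be an equivalence relation on {1,...,m} with all equivalence classes of size at most w, and let 1 ≤ c ≤ m-1. If the number of pairs (p,q) with p ~ q, 1 ≤ p ≤ c, c+1 ≤ q ≤ m equals (w/m)·c·(m-c), then ~ has exactly m/w equivalence classes (so w divides m) and each equivalence class contains the same number of elements of {1,...,c}. -/
/-!
Let a class have `a` elements below the cut and `b` above, `s = a + b ≤ w`, and write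
`d = m - c`. With the weight `X = m d a + m c b - c d s`, which is linear in the class, one has
`s X = m² a b + (m a - c s)²` (`X / (m² s)` is the tangent at `c / m` of the concave
`x (1 - x)`, taken at `x = a / s`). Hence `m² a b ≤ s X ≤ w X`, and since the weights add up
to `m c d`, summing over the classes gives `m · #pairs ≤ w c d`. In the equality case every
class has `m a = c s`, so `a, b, X > 0`, and then `s = w`.
-/

open Finset

section CutWeight

variable {R : Type*} [CommRing R]

def cutWeight (C D a b : R) : R := (C + D) * D * a + (C + D) * C * b - C * D * (a + b)

theorem mul_cutWeight_eq (C D a b : R) :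
    (a + b) * cutWeight C D a b = (C + D) ^ 2 * (a * b) + ((C + D) * a - C * (a + b)) ^ 2 := by
  unfold cutWeight; ring

variable [LinearOrder R] [IsStrictOrderedRing R]

theorem cutWeight_nonneg (C D : R) {a b : R} (ha : 0 ≤ a) (hb : 0 ≤ b) :
    0 ≤ cutWeight C D a b := by
  rcases (add_nonneg ha hb).eq_or_lt with hs | hs
  · obtain ⟨rfl, rfl⟩ : a = 0 ∧ b = 0 := ⟨by linarith, by linarith⟩
    simp [cutWeight]
  refine nonneg_of_mul_nonneg_right ?_ hs
  rw [mul_cutWeight_eq]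
  positivity

theorem sq_mul_le_mul_cutWeight (C D : R) {a b w : R} (ha : 0 ≤ a) (hb : 0 ≤ b)
    (hw : a + b ≤ w) : (C + D) ^ 2 * (a * b) ≤ w * cutWeight C D a b := by
  nlinarith [mul_cutWeight_eq C D a b, sq_nonneg ((C + D) * a - C * (a + b)),
    mul_le_mul_of_nonneg_right hw (cutWeight_nonneg C D ha hb)]

theorem eq_of_sq_mul_eq_mul_cutWeight {C D a b w : R} (hC : 0 < C) (hD : 0 < D) (ha : 0 ≤ a)
    (hb : 0 ≤ b) (hs : 0 < a + b) (hw : a + b ≤ w)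
    (h : (C + D) ^ 2 * (a * b) = w * cutWeight C D a b) :
    a + b = w ∧ (C + D) * a = w * C := by
  have hid := mul_cutWeight_eq C D a b
  have hX := cutWeight_nonneg C D ha hb
  have hprop : (C + D) * a = C * (a + b) := by
    nlinarith [sq_nonneg ((C + D) * a - C * (a + b)), mul_le_mul_of_nonneg_right hw hX]
  have hXpos : 0 < cutWeight C D a b := by
    have ha : 0 < a := by nlinarith [mul_pos hC hs]
    have hb : 0 < b := by nlinarith [mul_pos hD hs]
    refine pos_of_mul_pos_right ?_ hs.le
    rw [hid, hprop, sub_self]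
    positivity
  have hsw : a + b = w := mul_right_cancel₀ hXpos.ne' (by nlinarith)
  exact ⟨hsw, by rw [hprop, hsw, mul_comm]⟩

theorem Finset.eq_of_mul_sum_mul_eq {ι : Type*} (s : Finset ι) (a b : ι → R) {w : R}
    (ha : ∀ i ∈ s, 0 ≤ a i) (hb : ∀ i ∈ s, 0 ≤ b i) (hs : ∀ i ∈ s, 0 < a i + b i)
    (hw : ∀ i ∈ s, a i + b i ≤ w) (hC : 0 < ∑ i ∈ s, a i) (hD : 0 < ∑ i ∈ s, b i)
    (h : (∑ i ∈ s, a i + ∑ i ∈ s, b i) * ∑ i ∈ s, a i * b i =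
      w * (∑ i ∈ s, a i) * ∑ i ∈ s, b i) (i : ι) (hi : i ∈ s) :
    a i + b i = w ∧ (∑ i ∈ s, a i + ∑ i ∈ s, b i) * a i = w * ∑ i ∈ s, a i := by
  set C := ∑ i ∈ s, a i
  set D := ∑ i ∈ s, b i
  have hsum : ∑ j ∈ s, cutWeight C D (a j) (b j) = (C + D) * C * D := by
    simp only [cutWeight, sum_sub_distrib, sum_add_distrib, ← mul_sum]
    ring
  have hgap : ∑ j ∈ s, (w * cutWeight C D (a j) (b j) - (C + D) ^ 2 * (a j * b j)) = 0 := by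
    rw [sum_sub_distrib, ← mul_sum, ← mul_sum, hsum]
    linear_combination -(C + D) * h
  rw [sum_eq_zero_iff_of_nonneg fun j hj ↦
    sub_nonneg.2 (sq_mul_le_mul_cutWeight C D (ha j hj) (hb j hj) (hw j hj))] at hgap
  exact eq_of_sq_mul_eq_mul_cutWeight hC hD (ha i hi) (hb i hi) (hs i hi) (hw i hi)
    (sub_eq_zero.1 (hgap i hi)).symm

end CutWeight

namespace Finpartition

variable {α : Type*} [DecidableEq α]

theorem sum_card_filter_parts {s : Finset α} (P : Finpartition s) (p : α → Prop)
    [DecidablePred p] : ∑ t ∈ P.parts, #{x ∈ t | p x} = #{x ∈ s | p x} := by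
  rw [← (P.restrict (filter_subset p s)).sum_card_parts, P.sum_restrict _ card card_empty]
  refine sum_congr rfl fun t ht ↦ congrArg card ?_
  ext x
  have hts : t ⊆ s := P.le ht
  simp only [inf_eq_inter, mem_inter, mem_filter]
  exact and_congr_right fun hx ↦ (and_iff_right (hts hx)).symm

theorem card_filter_rel_eq_sum_parts [Fintype α] (S : Setoid α) [DecidableRel S.r]
    (p q : α → Prop) [DecidablePred p] [DecidablePred q] :
    #{xy : α × α | S.r xy.1 xy.2 ∧ p xy.1 ∧ q xy.2} =
      ∑ t ∈ (ofSetoid S).parts, #{x ∈ t | p x} * #{x ∈ t | q x} := by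
  set P := ofSetoid S
  rw [card_eq_sum_card_fiberwise (f := fun xy ↦ P.part xy.1) fun xy _ ↦ P.part_mem.2 (mem_univ _)]
  refine sum_congr rfl fun t ht ↦ ?_
  rw [← card_product]
  congr 1
  ext ⟨x, y⟩
  have hx : P.part x = t ↔ x ∈ t := ⟨fun h ↦ h ▸ P.mem_part (mem_univ x), P.part_eq_of_mem ht⟩
  simp only [mem_filter, mem_univ, true_and, mem_product, ← hx]
  constructor
  · rintro ⟨⟨hxy, hpx, hqy⟩, rfl⟩
    exact ⟨⟨rfl, hpx⟩, mem_part_ofSetoid_iff_rel.2 hxy, hqy⟩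
  · rintro ⟨⟨rfl, hpx⟩, hy, hqy⟩
    exact ⟨⟨mem_part_ofSetoid_iff_rel.1 hy, hpx, hqy⟩, rfl⟩

theorem card_eq_of_mul_sum_card_filter_mul_eq {s : Finset α} (P : Finpartition s) (p : α → Prop)
    [DecidablePred p] {w : ℕ} (hw : ∀ t ∈ P.parts, #t ≤ w) (hp : 0 < #{x ∈ s | p x})
    (hnp : 0 < #{x ∈ s | ¬p x})
    (h : #s * ∑ t ∈ P.parts, #{x ∈ t | p x} * #{x ∈ t | ¬p x} =
      w * #{x ∈ s | p x} * #{x ∈ s | ¬p x}) (t : Finset α) (ht : t ∈ P.parts) :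
    #t = w ∧ #s * #{x ∈ t | p x} = w * #{x ∈ s | p x} := by
  have hsplit (u : Finset α) : #{x ∈ u | p x} + #{x ∈ u | ¬p x} = #u :=
    card_filter_add_card_filter_not p
  have key := Finset.eq_of_mul_sum_mul_eq (R := ℤ) P.parts (fun u ↦ #{x ∈ u | p x})
    (fun u ↦ #{x ∈ u | ¬p x}) (w := w) (fun _ _ ↦ by positivity) (fun _ _ ↦ by positivity)
    (fun u hu ↦ by exact_mod_cast hsplit u ▸ (P.nonempty_of_mem_parts hu).card_pos)
    (fun u hu ↦ by exact_mod_cast hsplit u ▸ hw u hu)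
    (by exact_mod_cast P.sum_card_filter_parts p ▸ hp)
    (by exact_mod_cast P.sum_card_filter_parts (¬p ·) ▸ hnp)
    (by simp only [← Nat.cast_sum, P.sum_card_filter_parts]; exact_mod_cast hsplit s ▸ h) t ht
  simp only [← Nat.cast_sum, P.sum_card_filter_parts] at key
  rw [← hsplit t, ← hsplit s]
  exact_mod_cast key

end Finpartition

theorem sum_orbits_eclasses1_equality_general (m w c : ℕ) (hw : 0 < w)
    (hc1 : 1 ≤ c) (hc2 : c ≤ m - 1)
    (R : Fin m → Fin m → Prop) [DecidableRel R] (hR : Equivalence R)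
    (hclass : ∀ p : Fin m, (Finset.univ.filter (fun q => R p q)).card ≤ w)
    (heq : m * (Finset.univ.filter (fun pq : Fin m × Fin m =>
        R pq.1 pq.2 ∧ (pq.1 : ℕ) < c ∧ c ≤ (pq.2 : ℕ))).card = w * c * (m - c)) :
    w ∣ m ∧
    (Finset.univ.image (fun p : Fin m => Finset.univ.filter (fun q => R p q))).card = m / w ∧
    (∀ p : Fin m, (Finset.univ.filter (fun q => R p q)).card = w) ∧
    (∀ p : Fin m,
      m * (Finset.univ.filter (fun q : Fin m => R p q ∧ (q : ℕ) < c)).card = w * c) := by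
  let P := Finpartition.ofSetoid (⟨R, hR⟩ : Setoid (Fin m))
  have hmem (p : Fin m) : univ.filter (fun q ↦ R p q) ∈ P.parts := mem_image_of_mem _ (mem_univ p)
  have hlow : #{q : Fin m | (q : ℕ) < c} = c := by rw [Fin.card_filter_val_lt]; omega
  have hhigh : #{q : Fin m | ¬(q : ℕ) < c} = m - c := by
    rw [filter_not, card_sdiff_of_subset (filter_subset _ _), hlow, card_univ, Fintype.card_fin]
  have hclasses := P.card_eq_of_mul_sum_card_filter_mul_eq (fun q ↦ (q : ℕ) < c)
    (fun t ht ↦ by obtain ⟨p, -, rfl⟩ := mem_image.1 ht; exact hclass p) (by omega) (by omega)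
    (by rw [card_univ, Fintype.card_fin, hlow, hhigh, ← Finpartition.card_filter_rel_eq_sum_parts]
        simpa only [not_lt] using heq)
  have hcount : #P.parts * w = m := by
    rw [← sum_const_nat fun t ht ↦ (hclasses t ht).1, P.sum_card_parts, card_univ, Fintype.card_fin]
  refine ⟨Dvd.intro_left _ hcount, (Nat.div_eq_of_eq_mul_left hw hcount.symm).symm,
    fun p ↦ (hclasses _ (hmem p)).1, fun p ↦ ?_⟩
  rw [← filter_filter]
  simpa only [card_univ, Fintype.card_fin, hlow] using (hclasses _ (hmem p)).2

/-- Lemma (eclasses1), equality case: if the count of `R`-related pairs across the cut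
at `c` attains the bound `(w/m)·c·(m-c)`, then `R` has exactly `m/w` equivalence classes
(each of size exactly `w`, so `w ∣ m`) and each class contains the same number
(namely `c·w/m`) of elements among the first `c` indices. -/
theorem sum_orbits_eclasses1_equality (m w c : ℕ) (hm : 0 < m) (hw : 0 < w)
    (hc1 : 1 ≤ c) (hc2 : c ≤ m - 1)
    (R : Fin m → Fin m → Prop) [DecidableRel R] (hR : Equivalence R)
    (hclass : ∀ p : Fin m, (Finset.univ.filter (fun q => R p q)).card ≤ w)
    (heq : m * (Finset.univ.filter (fun pq : Fin m × Fin m =>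
        R pq.1 pq.2 ∧ (pq.1 : ℕ) < c ∧ c ≤ (pq.2 : ℕ))).card = w * c * (m - c)) :
    w ∣ m ∧
    (Finset.univ.image (fun p : Fin m => Finset.univ.filter (fun q => R p q))).card = m / w ∧
    (∀ p : Fin m, (Finset.univ.filter (fun q => R p q)).card = w) ∧
    (∀ p : Fin m,
      m * (Finset.univ.filter (fun q : Fin m => R p q ∧ (q : ℕ) < c)).card = w * c) :=
  sum_orbits_eclasses1_equality_general m w c hw hc1 hc2 R hR hclass heq
end

section
/- Let X ∈ su(m) be a skew-Hermitian traceless matrix with largest eigenvalue multiplicity w, and let Ψ be the annihilator in A_{m-1} of a vector with exactly two distinct values, taken with multiplicities c and m−c. Then |Φ_X ∩ N_Ψ| ≤ (w/m)|N_Ψ|, where N_Ψ = Φ \ Ψ. Combinatorially: if ~ is an equivalence relation on {1,...,m} with classes of size at most w, then the number of ordered pairs (p,q), p ≠ q, with p ~ q and exactly one of p,q lying in {1,...,c} is at most (w/m)·2c(m−c). -/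
/-!
Group the indices into the classes `K` of the relation and write `a_K`, `b_K` for the number of
indices of `K` below and above the cut, so that `∑ a_K = c`, `∑ b_K = m - c`, `a_K + b_K ≤ w`,
and the pairs to be counted number `2 ∑ a_K b_K`. With `P = ∑ a_K b_K`, `Q₁ = ∑ a_K²`,
`Q₂ = ∑ b_K²` the class bound gives `Q₁ + P ≤ w c` and `P + Q₂ ≤ w (m - c)`, and Cauchy–Schwarz
gives `P² ≤ Q₁ Q₂ ≤ (w c - P) (w (m - c) - P)`; expanding, `w m P ≤ w² c (m - c)`.
-/

open Finset

theorem mul_le_of_mul_self_le_mul {P Q₁ Q₂ x y w : ℕ} (hP : P * P ≤ Q₁ * Q₂)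
    (h₁ : Q₁ + P ≤ w * x) (h₂ : P + Q₂ ≤ w * y) : (x + y) * P ≤ w * (x * y) := by
  rcases Nat.eq_zero_or_pos w with rfl | hw
  · simp_all
  refine Nat.le_of_mul_le_mul_left ?_ hw
  have : Q₁ * Q₂ ≤ (w * x - P) * (w * y - P) := Nat.mul_le_mul (by omega) (by omega)
  zify [(by omega : P ≤ w * x), (by omega : P ≤ w * y)] at this hP ⊢
  nlinarith

theorem sum_add_sum_mul_sum_mul_le {ι : Type*} (s : Finset ι) (a b : ι → ℕ) {w : ℕ}
    (h : ∀ i ∈ s, a i + b i ≤ w) :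
    (∑ i ∈ s, a i + ∑ i ∈ s, b i) * ∑ i ∈ s, a i * b i ≤
      w * ((∑ i ∈ s, a i) * ∑ i ∈ s, b i) := by
  refine mul_le_of_mul_self_le_mul (Q₁ := ∑ i ∈ s, a i * a i) (Q₂ := ∑ i ∈ s, b i * b i)
    ?_ ?_ ?_
  · simpa only [sq] using sum_mul_sq_le_sq_mul_sq s a b
  · calc ∑ i ∈ s, a i * a i + ∑ i ∈ s, a i * b i = ∑ i ∈ s, a i * (a i + b i) := by
          rw [← sum_add_distrib]; simp only [mul_add]
      _ ≤ ∑ i ∈ s, a i * w := sum_le_sum fun i hi => Nat.mul_le_mul_left _ (h i hi)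
      _ = w * ∑ i ∈ s, a i := by rw [← sum_mul, mul_comm]
  · calc ∑ i ∈ s, a i * b i + ∑ i ∈ s, b i * b i = ∑ i ∈ s, b i * (a i + b i) := by
          rw [← sum_add_distrib]; simp only [mul_add, mul_comm]
      _ ≤ ∑ i ∈ s, b i * w := sum_le_sum fun i hi => Nat.mul_le_mul_left _ (h i hi)
      _ = w * ∑ i ∈ s, b i := by rw [← sum_mul, mul_comm]

section Fibers

variable {α β : Type*} [Fintype β] [DecidableEq β]

theorem card_filter_product_eq_sum (κ : α → β) (A B : Finset α) :
    #{pq ∈ A ×ˢ B | κ pq.1 = κ pq.2} = ∑ k, #{x ∈ A | κ x = k} * #{x ∈ B | κ x = k} := by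
  rw [card_eq_sum_card_fiberwise (f := fun pq : α × α => κ pq.1) (t := univ)
    (fun _ _ => mem_coe.2 (mem_univ _))]
  refine sum_congr rfl fun k _ => ?_
  rw [← card_product, filter_filter]
  congr 1
  ext ⟨p, q⟩
  simp only [mem_filter, mem_product]
  grind

variable [Fintype α] [DecidableEq α]

theorem card_cut_pairs_eq (κ : α → β) (S : Finset α) :
    #{pq : α × α | κ pq.1 = κ pq.2 ∧ ¬(pq.1 ∈ S ↔ pq.2 ∈ S)} =
      2 * ∑ k, #{x ∈ S | κ x = k} * #{x ∈ Sᶜ | κ x = k} := by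
  have hsplit : ({pq : α × α | κ pq.1 = κ pq.2 ∧ ¬(pq.1 ∈ S ↔ pq.2 ∈ S)} : Finset _) =
      {pq ∈ S ×ˢ Sᶜ | κ pq.1 = κ pq.2} ∪ {pq ∈ Sᶜ ×ˢ S | κ pq.1 = κ pq.2} := by
    ext ⟨p, q⟩
    simp only [mem_filter, mem_univ, true_and, mem_union, mem_product, mem_compl]
    tauto
  rw [hsplit, card_union_of_disjoint, card_filter_product_eq_sum, card_filter_product_eq_sum,
    two_mul]
  · simp only [mul_comm]
  · exact disjoint_filter_filter (disjoint_product.2 (Or.inl disjoint_compl_right))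

theorem card_mul_card_cut_pairs_le (κ : α → β) (S : Finset α) {w : ℕ}
    (hκ : ∀ k, #{x | κ x = k} ≤ w) :
    Fintype.card α * #{pq : α × α | κ pq.1 = κ pq.2 ∧ ¬(pq.1 ∈ S ↔ pq.2 ∈ S)} ≤
      w * (2 * #S * #Sᶜ) := by
  have hfib (T : Finset α) : #T = ∑ k, #{x ∈ T | κ x = k} :=
    card_eq_sum_card_fiberwise fun _ _ => mem_coe.2 (mem_univ _)
  have hsplit (k : β) : #{x ∈ S | κ x = k} + #{x ∈ Sᶜ | κ x = k} = #{x | κ x = k} := by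
    rw [← card_union_of_disjoint (disjoint_filter_filter disjoint_compl_right), ← filter_union,
      union_compl]
  rw [card_cut_pairs_eq, ← card_add_card_compl S, hfib S, hfib Sᶜ]
  calc _ = 2 * ((∑ k, #{x ∈ S | κ x = k} + ∑ k, #{x ∈ Sᶜ | κ x = k}) *
        ∑ k, #{x ∈ S | κ x = k} * #{x ∈ Sᶜ | κ x = k}) := by ring
    _ ≤ 2 * (w * ((∑ k, #{x ∈ S | κ x = k}) * ∑ k, #{x ∈ Sᶜ | κ x = k})) :=
        Nat.mul_le_mul_left _ <|
          sum_add_sum_mul_sum_mul_le _ _ _ fun k _ => (hsplit k).trans_le (hκ k)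
    _ = _ := by ring

end Fibers

section EquivalenceClasses

variable {α : Type*} [Fintype α] {R : α → α → Prop} [DecidableRel R]

theorem Equivalence.filter_eq_filter_iff (hR : Equivalence R) {p q : α} :
    univ.filter (R p) = univ.filter (R q) ↔ R p q := by
  refine ⟨fun h => ?_, fun h => ?_⟩
  · have : q ∈ univ.filter (R q) := by simp [hR.refl q]
    rw [← h] at this
    simpa using this
  · ext x
    simp only [mem_filter, mem_univ, true_and]
    exact ⟨hR.trans (hR.symm h), hR.trans h⟩

theorem Equivalence.card_filter_filter_eq_le [DecidableEq α] (hR : Equivalence R) {w : ℕ}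
    (hclass : ∀ p, #{q | R p q} ≤ w) (K : Finset α) : #{x | univ.filter (R x) = K} ≤ w := by
  obtain hK | ⟨x₀, hx₀⟩ := eq_empty_or_nonempty ({x | univ.filter (R x) = K} : Finset α)
  · simp [hK]
  refine le_trans (card_le_card fun x hx => ?_) (hclass x₀)
  simp only [mem_filter, mem_univ, true_and] at hx hx₀ ⊢
  exact hR.filter_eq_filter_iff.1 (hx₀.trans hx.symm)

end EquivalenceClasses

theorem su_annihilator_cut_bound_general (m w c : ℕ)
    (R : Fin m → Fin m → Prop) [DecidableRel R] (hR : Equivalence R)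
    (hclass : ∀ p : Fin m, (Finset.univ.filter (fun q => R p q)).card ≤ w) :
    m * (Finset.univ.filter (fun pq : Fin m × Fin m =>
        pq.1 ≠ pq.2 ∧ R pq.1 pq.2 ∧
          ¬ (((pq.1 : ℕ) < c) ↔ ((pq.2 : ℕ) < c)))).card
      ≤ w * (2 * c * (m - c)) := by
  set S : Finset (Fin m) := {p | (p : ℕ) < c}
  have hS : #S = min m c := Fin.card_filter_val_lt
  have hSc : #Sᶜ = m - c := by rw [card_compl, Fintype.card_fin, hS]; omega
  have hpairs : univ.filter (fun pq : Fin m × Fin m =>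
        pq.1 ≠ pq.2 ∧ R pq.1 pq.2 ∧ ¬ (((pq.1 : ℕ) < c) ↔ ((pq.2 : ℕ) < c))) =
      univ.filter (fun pq : Fin m × Fin m =>
        univ.filter (R pq.1) = univ.filter (R pq.2) ∧ ¬(pq.1 ∈ S ↔ pq.2 ∈ S)) := by
    ext ⟨p, q⟩
    simp only [S, mem_filter, mem_univ, true_and, hR.filter_eq_filter_iff]
    refine ⟨fun h => h.2, fun h => ⟨?_, h⟩⟩
    rintro rfl
    exact h.2 Iff.rfl
  have hcut := card_mul_card_cut_pairs_le _ S (hR.card_filter_filter_eq_le hclass)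
  rw [Fintype.card_fin, ← hpairs] at hcut
  calc _ ≤ w * (2 * #S * #Sᶜ) := hcut
    _ ≤ w * (2 * c * (m - c)) := by rw [hS, hSc]; gcongr; exact min_le_right _ _

/-- Combinatorial form of `|Φ_X ∩ N_Ψ| ≤ (w/m)|N_Ψ|` for `su(m)`: if `R` is an
equivalence relation on `Fin m` with all classes of size at most `w`, and
`N_Ψ` consists of ordered pairs `(p,q)`, `p ≠ q`, with exactly one of `p, q` among the
first `c` indices (so `|N_Ψ| = 2c(m−c)`), then
`m · |{(p,q) ∈ N_Ψ : R p q}| ≤ w · 2c(m−c)`. -/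
theorem su_annihilator_cut_bound (m w c : ℕ) (hm : 0 < m) (hw : 0 < w)
    (hc1 : 1 ≤ c) (hc2 : c ≤ m - 1)
    (R : Fin m → Fin m → Prop) [DecidableRel R] (hR : Equivalence R)
    (hclass : ∀ p : Fin m, (Finset.univ.filter (fun q => R p q)).card ≤ w) :
    m * (Finset.univ.filter (fun pq : Fin m × Fin m =>
        pq.1 ≠ pq.2 ∧ R pq.1 pq.2 ∧
          ¬ (((pq.1 : ℕ) < c) ↔ ((pq.2 : ℕ) < c)))).card
      ≤ w * (2 * c * (m - c)) :=
  su_annihilator_cut_bound_general m w c R hR hclass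
end

section
/- Let ~ be an equivalence relation on {1,...,m} with every class of size at most w. If there exists a cut c with 1 ≤ c ≤ m−1 such that m·|{(p,q) : p ~ q, p ≤ c < q}| = w·c·(m−c), then w divides m and every equivalence class has size exactly w. -/
theorem keyP (w a1 b1 a2 b2 : ℕ) (h1 : a1 + b1 ≤ w) (h2 : a2 + b2 ≤ w) :
    (a2+b2)*(a1*b1) + (a1+b1)*(a2*b2) ≤ w*(a1*b2+a2*b1) := by
  zify at *
  have ha1 : (0:ℤ) ≤ a1 := Int.ofNat_nonneg a1
  have hb1 : (0:ℤ) ≤ b1 := Int.ofNat_nonneg b1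
  have ha2 : (0:ℤ) ≤ a2 := Int.ofNat_nonneg a2
  have hb2 : (0:ℤ) ≤ b2 := Int.ofNat_nonneg b2
  have d1 : (0:ℤ) ≤ (w:ℤ) - (a1+b1) := by linarith
  have d2 : (0:ℤ) ≤ (w:ℤ) - (a2+b2) := by linarith
  have P2 : (0:ℤ) ≤ ((w:ℤ) - (a2+b2)) * (a1*b2) := mul_nonneg d2 (mul_nonneg ha1 hb2)
  have P3 : (0:ℤ) ≤ ((w:ℤ) - (a1+b1)) * (a2*b1) := mul_nonneg d1 (mul_nonneg ha2 hb1)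
  have P2' : (0:ℤ) ≤ ((w:ℤ) - (a1+b1)) * (a1*b2) := mul_nonneg d1 (mul_nonneg ha1 hb2)
  have P3' : (0:ℤ) ≤ ((w:ℤ) - (a2+b2)) * (a2*b1) := mul_nonneg d2 (mul_nonneg ha2 hb1)
  rcases le_total ((a2:ℤ)*b1) ((a1:ℤ)*b2) with h | h
  · rcases le_total (b1:ℤ) (b2:ℤ) with hb | hb
    · nlinarith [mul_nonneg (sub_nonneg.2 hb) (sub_nonneg.2 h)]
    · rcases le_total (a2:ℤ) (a1:ℤ) with ha | ha
      · nlinarith [mul_nonneg (sub_nonneg.2 ha) (sub_nonneg.2 h)]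
      · have he : (a1:ℤ)*b2 = a2*b1 := le_antisymm (mul_le_mul ha hb hb2 ha2) h
        nlinarith []
  · rcases le_total (b2:ℤ) (b1:ℤ) with hb | hb
    · nlinarith [mul_nonneg (sub_nonneg.2 hb) (sub_nonneg.2 h)]
    · rcases le_total (a1:ℤ) (a2:ℤ) with ha | ha
      · nlinarith [mul_nonneg (sub_nonneg.2 ha) (sub_nonneg.2 h)]
      · have he : (a2:ℤ)*b1 = a1*b2 := le_antisymm (mul_le_mul ha hb hb1 ha1) h
        nlinarith []

theorem uniform_aux {α : Type*} (w m c : ℕ) (hw : 0 < w) (hc1 : 1 ≤ c) (hcm : c < m)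
    (T : Finset α) (a b : α → ℕ)
    (hsw : ∀ t ∈ T, a t + b t ≤ w) (hs1 : ∀ t ∈ T, 1 ≤ a t + b t)
    (hmsum : ∑ t ∈ T, (a t + b t) = m) (hcsum : ∑ t ∈ T, a t = c)
    (heq : m * (∑ t ∈ T, a t * b t) = w * c * (m - c)) :
    w ∣ m ∧ ∀ t ∈ T, a t + b t = w := by
  have hbsum : ∑ t ∈ T, b t = m - c := by
    have : c + ∑ t ∈ T, b t = m := by rw [← hcsum, ← Finset.sum_add_distrib, hmsum]
    omega
  set f : α × α → ℕ := fun p => (a p.2 + b p.2)*(a p.1*b p.1) + (a p.1 + b p.1)*(a p.2*b p.2)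
    with hf
  set g : α × α → ℕ := fun p => w*(a p.1*b p.2 + a p.2*b p.1) with hg
  have hfg : ∀ p ∈ T ×ˢ T, f p ≤ g p := by
    rintro ⟨t, u⟩ hp
    rw [Finset.mem_product] at hp
    exact keyP w (a t) (b t) (a u) (b u) (hsw t hp.1) (hsw u hp.2)
  have hsumf : ∑ p ∈ T ×ˢ T, f p = 2 * (m * ∑ t ∈ T, a t * b t) := by
    rw [Finset.sum_product]
    have : ∀ t u : α, f (t, u) = (a u + b u)*(a t*b t) + (a t + b t)*(a u*b u) := fun _ _ => rfl
    simp only [this]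
    simp only [Finset.sum_add_distrib]
    have h2 : (∑ t ∈ T, ∑ u ∈ T, (a t + b t)*(a u*b u))
        = ∑ t ∈ T, ∑ u ∈ T, (a u + b u)*(a t*b t) := Finset.sum_comm
    rw [h2]
    have h3 : (∑ t ∈ T, ∑ u ∈ T, (a u + b u)*(a t*b t)) = m * ∑ t ∈ T, a t * b t := by
      have : ∀ t ∈ T, (∑ u ∈ T, (a u + b u)*(a t*b t)) = m * (a t * b t) := by
        intro t _
        rw [← Finset.sum_mul, hmsum]
      rw [Finset.sum_congr rfl this, ← Finset.mul_sum]
    rw [h3]; ring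
  have hsumg : ∑ p ∈ T ×ˢ T, g p = 2 * (w * c * (m - c)) := by
    rw [Finset.sum_product]
    have : ∀ t u : α, g (t, u) = w*(a t*b u) + w*(a u*b t) := by
      intro t u; simp only [hg, mul_add]
    simp only [this]
    simp only [Finset.sum_add_distrib]
    have h2 : (∑ t ∈ T, ∑ u ∈ T, w*(a u*b t)) = ∑ t ∈ T, ∑ u ∈ T, w*(a t*b u) :=
      Finset.sum_comm
    rw [h2]
    have h3 : (∑ t ∈ T, ∑ u ∈ T, w*(a t*b u)) = w * c * (m - c) := by
      have : ∀ t ∈ T, (∑ u ∈ T, w*(a t*b u)) = w * (a t * (m - c)) := by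
        intro t _
        rw [← Finset.mul_sum, ← Finset.mul_sum, hbsum]
      rw [Finset.sum_congr rfl this]
      have : ∀ t ∈ T, w * (a t * (m - c)) = (w * (m-c)) * a t := fun t _ => by ring
      rw [Finset.sum_congr rfl this, ← Finset.mul_sum, hcsum]; ring
    rw [h3]; ring
  have hsums : ∑ p ∈ T ×ˢ T, f p = ∑ p ∈ T ×ˢ T, g p := by
    rw [hsumf, hsumg, heq]
  have hpt : ∀ p ∈ T ×ˢ T, f p = g p :=
    (Finset.sum_eq_sum_iff_of_le hfg).1 hsums
  have hEq : ∀ t ∈ T, ∀ u ∈ T,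
      (a u + b u)*(a t*b t) + (a t + b t)*(a u*b u) = w*(a t*b u + a u*b t) := by
    intro t ht u hu
    exact hpt (t, u) (Finset.mem_product.2 ⟨ht, hu⟩)
  -- all classes have size w
  have hall : ∀ t ∈ T, a t + b t = w := by
    intro t ht
    by_contra hst
    have hdiag := hEq t ht t ht
    have hab0 : a t * b t = 0 := by
      rcases Nat.eq_zero_or_pos (a t * b t) with h | h
      · exact h
      · exfalso; apply hst
        nlinarith [hdiag]
    rcases Nat.mul_eq_zero.1 hab0 with ha0 | hb0
    · -- a t = 0, b t = s t ≥ 1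
      have hbt : 1 ≤ b t := by have := hs1 t ht; omega
      obtain ⟨u, hu, hau⟩ : ∃ u ∈ T, 0 < a u := by
        by_contra hno
        push_neg at hno
        have : ∑ u ∈ T, a u = 0 := Finset.sum_eq_zero fun u hu => by
          have := hno u hu; omega
        omega
      have he := hEq t ht u hu
      rw [ha0] at he
      -- he : (a u + b u)*(0*b t) + (0 + b t)*(a u*b u) = w*(0*b u + a u*b t)
      have hbu : b u = w := by
        have h1 : b t * (a u * b u) = b t * (a u * w) := by
          simp only [Nat.zero_mul, Nat.mul_zero, Nat.zero_add, Nat.add_zero] at he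
          rw [he]; ring
        have h2 : a u * b u = a u * w := Nat.eq_of_mul_eq_mul_left hbt h1
        exact Nat.eq_of_mul_eq_mul_left hau h2
      have := hsw u hu
      omega
    · -- b t = 0
      have hat : 1 ≤ a t := by have := hs1 t ht; omega
      obtain ⟨u, hu, hbu⟩ : ∃ u ∈ T, 0 < b u := by
        by_contra hno
        push_neg at hno
        have h0 : ∑ u ∈ T, b u = 0 := Finset.sum_eq_zero fun u hu => by
          have := hno u hu; omega
        rw [hbsum] at h0
        omega
      have he := hEq t ht u hu
      rw [hb0] at he
      have hau : a u = w := by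
        have h1 : a t * (a u * b u) = a t * (w * b u) := by
          simp only [Nat.zero_mul, Nat.mul_zero, Nat.zero_add, Nat.add_zero] at he
          rw [he]; ring
        have h2 : a u * b u = w * b u := Nat.eq_of_mul_eq_mul_left hat h1
        exact Nat.eq_of_mul_eq_mul_right hbu h2
      have := hsw u hu
      omega
  refine ⟨⟨T.card, ?_⟩, hall⟩
  rw [← hmsum, Finset.sum_congr rfl hall, Finset.sum_const, smul_eq_mul, Nat.mul_comm]

/-- If an equivalence relation on `Fin m` with classes of size at most `w` attains
equality `m·|{(p,q) : p ~ q, p ≤ c < q}| = w·c·(m−c)` for some cut `1 ≤ c ≤ m−1`,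
then `w ∣ m` and every equivalence class has size exactly `w`. -/
theorem eclasses_equality_forces_uniform (m w c : ℕ) (hm : 0 < m) (hw : 0 < w)
    (hc1 : 1 ≤ c) (hc2 : c ≤ m - 1)
    (R : Fin m → Fin m → Prop) [DecidableRel R] (hR : Equivalence R)
    (hclass : ∀ p : Fin m, (Finset.univ.filter (fun x => R p x)).card ≤ w)
    (heq : m * (Finset.univ.filter (fun pq : Fin m × Fin m =>
        R pq.1 pq.2 ∧ (pq.1 : ℕ) < c ∧ c ≤ (pq.2 : ℕ))).card = w * c * (m - c)) :
    w ∣ m ∧ ∀ p : Fin m, (Finset.univ.filter (fun x => R p x)).card = w := by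
  classical
  have hcm : c < m := by omega
  have hclsne : ∀ p : Fin m, (Finset.univ.filter (fun x => R p x)).Nonempty :=
    fun p => ⟨p, Finset.mem_filter.2 ⟨Finset.mem_univ _, hR.refl p⟩⟩
  set r : Fin m → Fin m := fun p => (Finset.univ.filter (fun x => R p x)).min' (hclsne p)
    with hrdef
  have hcls_eq : ∀ p q : Fin m, R p q →
      (Finset.univ.filter (fun x => R p x)) = (Finset.univ.filter (fun x => R q x)) := by
    intro p q h
    ext x
    simp only [Finset.mem_filter, Finset.mem_univ, true_and]
    exact ⟨fun hx => hR.trans (hR.symm h) hx, fun hx => hR.trans h hx⟩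
  have hrR : ∀ p, R p (r p) := by
    intro p
    have := (Finset.univ.filter (fun x => R p x)).min'_mem (hclsne p)
    exact (Finset.mem_filter.1 this).2
  have hr_eq : ∀ p q, R p q → r p = r q := by
    intro p q h
    simp only [hrdef]
    congr 1
    exact hcls_eq p q h
  have hr_idem : ∀ p, r (r p) = r p := fun p => (hr_eq p (r p) (hrR p)).symm
  set T : Finset (Fin m) := Finset.univ.image r with hT
  have hrT : ∀ p, r p ∈ T := fun p => Finset.mem_image.2 ⟨p, Finset.mem_univ p, rfl⟩
  have hTfix : ∀ t ∈ T, r t = t := by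
    intro t ht
    obtain ⟨p, _, hp⟩ := Finset.mem_image.1 ht
    rw [← hp, hr_idem]
  have hfiber : ∀ t ∈ T, ∀ x, r x = t ↔ R t x := by
    intro t ht x
    constructor
    · intro h; exact hR.symm (h ▸ hrR x)
    · intro h; rw [← hr_eq t x h, hTfix t ht]
  set a : Fin m → ℕ :=
    fun t => ((Finset.univ.filter (fun x => R t x)).filter (fun x : Fin m => x.val < c)).card with ha
  set b : Fin m → ℕ :=
    fun t => ((Finset.univ.filter (fun x => R t x)).filter (fun x : Fin m => ¬ x.val < c)).card with hb
  have hs : ∀ t, a t + b t = (Finset.univ.filter (fun x => R t x)).card := by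
    intro t
    exact Finset.card_filter_add_card_filter_not (p := fun x : Fin m => x.val < c)
  have hsw : ∀ t ∈ T, a t + b t ≤ w := fun t _ => (hs t) ▸ hclass t
  have hs1 : ∀ t ∈ T, 1 ≤ a t + b t := fun t _ => (hs t) ▸ Finset.card_pos.2 (hclsne t)
  have hfib_set : ∀ t ∈ T, (Finset.univ.filter (fun x : Fin m => r x = t))
      = Finset.univ.filter (fun x => R t x) := by
    intro t ht
    ext x
    simp only [Finset.mem_filter, Finset.mem_univ, true_and]
    exact hfiber t ht x
  have hmsum : ∑ t ∈ T, (a t + b t) = m := by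
    have h1 : (Finset.univ : Finset (Fin m)).card
        = ∑ t ∈ T, ((Finset.univ.filter (fun x : Fin m => r x = t)).card) :=
      Finset.card_eq_sum_card_fiberwise (fun x _ => hrT x)
    rw [Finset.card_univ, Fintype.card_fin] at h1
    refine Eq.trans (Finset.sum_congr rfl fun t ht => ?_) h1.symm
    rw [hs t, hfib_set t ht]
  have hcsum : ∑ t ∈ T, a t = c := by
    have h1 : (Finset.univ.filter (fun x : Fin m => x.val < c)).card
        = ∑ t ∈ T, (((Finset.univ.filter (fun x : Fin m => x.val < c)).filter
            (fun x => r x = t)).card) :=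
      Finset.card_eq_sum_card_fiberwise (fun x _ => hrT x)
    have h2 : (Finset.univ.filter (fun x : Fin m => x.val < c)).card = c := by
      have he : (Finset.univ.filter (fun x : Fin m => x.val < c))
          = (Finset.range c).attachFin
            (fun x hx => lt_of_lt_of_le (Finset.mem_range.1 hx) (le_of_lt hcm)) := by
        ext x; simp [Finset.mem_attachFin]
      rw [he, Finset.card_attachFin, Finset.card_range]
    rw [h2] at h1
    refine Eq.trans (Finset.sum_congr rfl fun t ht => ?_) h1.symm
    simp only [ha]
    congr 1
    ext x
    simp only [Finset.mem_filter, Finset.mem_univ, true_and]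
    rw [hfiber t ht x]
    tauto
  have hN : (Finset.univ.filter (fun pq : Fin m × Fin m =>
        R pq.1 pq.2 ∧ (pq.1 : ℕ) < c ∧ c ≤ (pq.2 : ℕ))).card = ∑ t ∈ T, a t * b t := by
    set S := Finset.univ.filter (fun pq : Fin m × Fin m =>
        R pq.1 pq.2 ∧ (pq.1 : ℕ) < c ∧ c ≤ (pq.2 : ℕ)) with hS
    have h1 : S.card = ∑ t ∈ T, ((S.filter (fun pq => r pq.1 = t)).card) :=
      Finset.card_eq_sum_card_fiberwise (fun x _ => hrT x.1)
    rw [h1]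
    refine Finset.sum_congr rfl fun t ht => ?_
    have hprod : S.filter (fun pq => r pq.1 = t)
        = ((Finset.univ.filter (fun x => R t x)).filter (fun x : Fin m => x.val < c)) ×ˢ
          ((Finset.univ.filter (fun x => R t x)).filter (fun x : Fin m => ¬ x.val < c)) := by
      ext pq
      simp only [hS, Finset.mem_filter, Finset.mem_univ, true_and, Finset.mem_product]
      constructor
      · rintro ⟨⟨hRpq, hp, hq⟩, hrt⟩
        have h1 : R t pq.1 := (hfiber t ht pq.1).1 hrt
        exact ⟨⟨h1, hp⟩, ⟨hR.trans h1 hRpq, not_lt.2 hq⟩⟩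
      · rintro ⟨⟨h1, hp⟩, ⟨h2, hq⟩⟩
        exact ⟨⟨hR.trans (hR.symm h1) h2, hp, not_lt.1 hq⟩, (hfiber t ht pq.1).2 h1⟩
    rw [hprod, Finset.card_product]
  rw [hN] at heq
  obtain ⟨hdvd, hall⟩ := uniform_aux w m c hw hc1 hcm T a b hsw hs1 hmsum hcsum heq
  refine ⟨hdvd, fun p => ?_⟩
  have h1 : (Finset.univ.filter (fun x => R p x)) = (Finset.univ.filter (fun x => R (r p) x)) :=
    hcls_eq p (r p) (hrR p)
  rw [h1, ← hs (r p)]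
  exact hall (r p) (hrT p)
end
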